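/- Let M be a separable positive semidefinite matrix on ℂ^{d} ⊗ ℂ^{d} with trace 1, written M = Σ_i p_i A_i ⊗ B_i with p_i ≥ 0, A_i, B_i positive semidefinite of trace 1, Σ_i p_i = 1. Then the realigned matrix M^R, defined by M^R (k,k') (l,l') = M (k,l) (k',l'), has trace norm at most 1 (realignment/computable cross-norm criterion). -/

import Mathlib

open Matrix Kronecker ComplexOrder

/-- The positive semidefinite square root of a positive semidefinite matrix
(as defined in the older Mathlib, where `Matrix.PosSemidef.sqrt` existed). -/
noncomputable def Matrix.PosSemidef.sqrt {n 𝕜 : Type*} [Fintype n] [DecidableEq n] [RCLike 𝕜]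
    {A : Matrix n n 𝕜} (hA : A.PosSemidef) : Matrix n n 𝕜 :=
  hA.1.eigenvectorUnitary.1 * diagonal ((↑) ∘ (Real.sqrt ·) ∘ hA.1.eigenvalues) *
    (star hA.1.eigenvectorUnitary : Matrix n n 𝕜)

/-- The trace norm `Tr √(Xᴴ X)` of a square complex matrix. -/
noncomputable def traceNorm {n : Type*} [Fintype n] [DecidableEq n]
    (X : Matrix n n ℂ) : ℝ :=
  ((Matrix.posSemidef_conjTranspose_mul_self X).sqrt).trace.re

noncomputable def evnorm {n : Type*} [Fintype n] (v : n → ℂ) : ℝ :=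
  Real.sqrt (∑ k, ‖v k‖ ^ 2)

lemma evnorm_eq {n : Type*} [Fintype n] (v : n → ℂ) :
    evnorm v = ‖(WithLp.equiv 2 (n → ℂ)).symm v‖ := by
  rw [EuclideanSpace.norm_eq]; rfl

lemma traceNorm_le_sum {n ι : Type*} [Fintype n] [DecidableEq n] [Fintype ι]
    (a b : ι → n → ℂ) (X : Matrix n n ℂ)
    (hX : X = ∑ i, Matrix.vecMulVec (a i) (b i)) :
    traceNorm X ≤ ∑ i, evnorm (a i) * evnorm (b i) := by
  classical
  set hH := Matrix.posSemidef_conjTranspose_mul_self X with hHdef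
  set lam := hH.1.eigenvalues with hlam
  set V : Matrix n n ℂ := (Matrix.IsHermitian.eigenvectorUnitary hH.1 : Matrix n n ℂ) with hV
  have hVV : star V * V = 1 := Unitary.coe_star_mul_self _
  have hVV' : V * star V = 1 := Unitary.coe_mul_star_self _
  -- trace norm = ∑ √λ
  have htn : traceNorm X = ∑ j, Real.sqrt (lam j) := by
    have h1 : hH.sqrt.trace = ∑ j, ((Real.sqrt (lam j) : ℝ) : ℂ) := by
      rw [Matrix.PosSemidef.sqrt, Matrix.trace_mul_cycle,
        Unitary.coe_star_mul_self, one_mul, Matrix.trace_diagonal]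
      rfl
    rw [traceNorm, h1, Complex.re_sum]; simp
  -- Y = X V has orthogonal columns with norms √λ
  set Y : Matrix n n ℂ := X * V with hY
  have hYY : Yᴴ * Y = Matrix.diagonal (fun j => ((lam j : ℝ) : ℂ)) := by
    have := Matrix.IsHermitian.conjStarAlgAut_star_eigenvectorUnitary hH.1
    rw [Unitary.conjStarAlgAut_star_apply] at this
    calc Yᴴ * Y = star V * (Xᴴ * X) * V := by
          rw [hY, Matrix.conjTranspose_mul]; noncomm_ring
      _ = Matrix.diagonal (fun j => ((lam j : ℝ) : ℂ)) := by
          rw [this]; rfl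
  -- columns as Euclidean vectors
  set y : n → EuclideanSpace ℂ n := fun j => (WithLp.equiv 2 (n → ℂ)).symm (fun k => Y k j) with hy
  have hinner : ∀ j j', (inner ℂ (y j) (y j') : ℂ) = (Yᴴ * Y) j j' := by
    intro j j'
    simp [hy, PiLp.inner_apply, Matrix.mul_apply, Matrix.conjTranspose_apply, RCLike.inner_apply]
    exact Finset.sum_congr rfl fun _ _ => mul_comm _ _
  have hnorm : ∀ j, ‖y j‖ = Real.sqrt (lam j) := by
    intro j
    have h2 : (inner ℂ (y j) (y j) : ℂ) = ((lam j : ℝ) : ℂ) := by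
      rw [hinner, hYY]; simp
    rw [inner_self_eq_norm_sq_to_K (𝕜 := ℂ)] at h2
    rw [← RCLike.ofReal_pow] at h2
    have h3 : ‖y j‖ ^ 2 = lam j := RCLike.ofReal_injective h2
    rw [← h3, Real.sqrt_sq (norm_nonneg _)]
  have horth : ∀ j j', j ≠ j' → (inner ℂ (y j) (y j') : ℂ) = 0 := by
    intro j j' hjj'
    rw [hinner, hYY, Matrix.diagonal_apply_ne _ hjj']
  -- unit vectors in column directions
  set u : n → EuclideanSpace ℂ n := fun j => ((‖y j‖ : ℂ)⁻¹) • y j with hu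
  have huy : ∀ j, (inner ℂ (u j) (y j) : ℂ) = ((‖y j‖ : ℝ) : ℂ) := by
    intro j
    by_cases h : y j = 0
    · simp [hu, h]
    · have hne : ((‖y j‖ : ℝ) : ℂ) ≠ 0 := by
        simpa using norm_ne_zero_iff.mpr h
      rw [hu]
      simp only [inner_smul_left, map_inv₀, Complex.conj_ofReal]
      rw [inner_self_eq_norm_sq_to_K (𝕜 := ℂ)]
      field_simp
      rfl
  have hbessel : ∀ x : EuclideanSpace ℂ n, ∑ j, ‖(inner ℂ (u j) x : ℂ)‖ ^ 2 ≤ ‖x‖ ^ 2 := by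
    intro x
    have horthu : Orthonormal ℂ (fun j : {j : n // y j ≠ 0} => u j.1) := by
      rw [orthonormal_iff_ite]
      intro i j
      by_cases hij : i = j
      · subst hij
        simp only [if_pos rfl, hu]
        rw [inner_smul_left, inner_smul_right, inner_self_eq_norm_sq_to_K (𝕜 := ℂ)]
        have hne : ((‖y i.1‖ : ℝ) : ℂ) ≠ 0 := by simpa using norm_ne_zero_iff.mpr i.2
        rw [map_inv₀, Complex.conj_ofReal]
        field_simp
        rw [if_pos trivial, mul_one]; rfl
      · have hij' : i.1 ≠ j.1 := fun hh => hij (Subtype.ext hh)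
        simp only [if_neg hij, hu]
        rw [inner_smul_left, inner_smul_right, horth _ _ hij']
        ring
    have hb := horthu.sum_inner_products_le (s := Finset.univ) x
    have hzero : ∀ j, y j = 0 → (inner ℂ (u j) x : ℂ) = 0 := by
      intro j hj; simp [hu, hj]
    calc ∑ j, ‖(inner ℂ (u j) x : ℂ)‖ ^ 2
        = ∑ j ∈ Finset.univ.filter (fun j => y j ≠ 0), ‖(inner ℂ (u j) x : ℂ)‖ ^ 2 := by
          rw [Finset.sum_filter]
          refine Finset.sum_congr rfl fun j _ => ?_
          by_cases h : y j = 0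
          · simp [h, hzero j h]
          · simp [h]
      _ = ∑ j : {j : n // y j ≠ 0}, ‖(inner ℂ (u j.1) x : ℂ)‖ ^ 2 := by
          rw [← Finset.sum_subtype (Finset.univ.filter (fun j => y j ≠ 0))
            (fun j => by simp) (fun j => ‖(inner ℂ (u j) x : ℂ)‖ ^ 2)]
      _ ≤ ‖x‖ ^ 2 := hb
  -- unitary preserves vector norms
  have hcnorm : ∀ (v : n → ℂ), ∑ j, ‖∑ l, v l * V l j‖ ^ 2 = ∑ l, ‖v l‖ ^ 2 := by
    intro v
    have hre : ∀ w : n → ℂ, ∑ j, ‖w j‖ ^ 2 = (dotProduct (star w) w).re := by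
      intro w
      rw [dotProduct, Complex.re_sum]
      refine Finset.sum_congr rfl fun j _ => ?_
      simp only [Pi.star_apply, RCLike.star_def, Complex.sq_norm]
      rw [mul_comm, Complex.mul_conj, Complex.ofReal_re]
    have hvm : (fun j => ∑ l, v l * V l j) = v ᵥ* V := by
      funext j; rw [Matrix.vecMul, dotProduct]
    have hdp : dotProduct (star (v ᵥ* V)) (v ᵥ* V) = dotProduct (star v) v := by
      rw [Matrix.star_vecMul, dotProduct_comm, dotProduct_mulVec,
        Matrix.vecMul_vecMul, Matrix.star_eq_conjTranspose] at *
      rw [show V * Vᴴ = 1 from by rw [← Matrix.star_eq_conjTranspose]; exact hVV']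
      rw [Matrix.vecMul_one, dotProduct_comm]
    calc ∑ j, ‖∑ l, v l * V l j‖ ^ 2 = ∑ j, ‖(v ᵥ* V) j‖ ^ 2 :=
          Finset.sum_congr rfl fun j _ => by rw [congrFun hvm j]
      _ = (dotProduct (star (v ᵥ* V)) (v ᵥ* V)).re := hre _
      _ = (dotProduct (star v) v).re := by rw [hdp]
      _ = ∑ l, ‖v l‖ ^ 2 := (hre v).symm
  -- column expansion
  set aE : ι → EuclideanSpace ℂ n := fun i => (WithLp.equiv 2 (n → ℂ)).symm (a i) with haE
  set c : ι → n → ℂ := fun i j => ∑ l, b i l * V l j with hc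
  have hcol : ∀ j, y j = ∑ i, c i j • aE i := by
    intro j
    apply PiLp.ext
    intro k
    have h1 : y j k = ∑ l, X k l * V l j := by
      simp [hy, hY, Matrix.mul_apply]
    have h2 : (∑ i, c i j • aE i) k = ∑ i, c i j * a i k := by
      rw [show ((∑ i, c i j • aE i) k) = ∑ i, (c i j • aE i) k from
        by rw [WithLp.ofLp_sum, Finset.sum_apply]]
      refine Finset.sum_congr rfl fun x _ => ?_
      rw [PiLp.smul_apply, smul_eq_mul]
      rfl
    rw [h1, h2, hX]
    simp_rw [Matrix.sum_apply, Matrix.vecMulVec_apply, Finset.sum_mul]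
    rw [Finset.sum_comm]
    refine Finset.sum_congr rfl fun i _ => ?_
    rw [hc]
    simp only [Finset.mul_sum, Finset.sum_mul]
    refine Finset.sum_congr rfl fun l _ => ?_
    ring
  -- main chain
  rw [htn]
  have h4 : ∑ j, Real.sqrt (lam j) = ∑ j, ‖y j‖ :=
    Finset.sum_congr rfl fun j _ => (hnorm j).symm
  have h5 : ∑ j, ‖y j‖ = ∑ i, (∑ j, c i j * (inner ℂ (u j) (aE i) : ℂ)).re := by
    calc ∑ j, ‖y j‖ = ∑ j, (inner ℂ (u j) (y j) : ℂ).re := by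
          refine Finset.sum_congr rfl fun j _ => ?_
          rw [huy]; simp
      _ = ∑ j, ∑ i, (c i j * (inner ℂ (u j) (aE i) : ℂ)).re := by
          refine Finset.sum_congr rfl fun j _ => ?_
          rw [hcol j, inner_sum]
          simp_rw [inner_smul_right]
          rw [Complex.re_sum]
      _ = ∑ i, (∑ j, c i j * (inner ℂ (u j) (aE i) : ℂ)).re := by
          rw [Finset.sum_comm]
          refine Finset.sum_congr rfl fun i _ => ?_
          rw [Complex.re_sum]
  rw [h4, h5]
  refine Finset.sum_le_sum fun i _ => ?_
  set g : n → ℂ := fun j => (inner ℂ (u j) (aE i) : ℂ) with hg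
  set cc : EuclideanSpace ℂ n := (WithLp.equiv 2 (n → ℂ)).symm (fun j => (starRingEnd ℂ) (c i j)) with hcc
  set w : EuclideanSpace ℂ n := (WithLp.equiv 2 (n → ℂ)).symm g with hw
  have hip : (inner ℂ cc w : ℂ) = ∑ j, c i j * g j := by
    simp [hcc, hw, PiLp.inner_apply, RCLike.inner_apply]
    exact Finset.sum_congr rfl fun _ _ => mul_comm _ _
  have hccn : ‖cc‖ = evnorm (b i) := by
    rw [← evnorm_eq, evnorm, evnorm]
    congr 1
    calc ∑ j, ‖(starRingEnd ℂ) (c i j)‖ ^ 2 = ∑ j, ‖c i j‖ ^ 2 := by simp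
      _ = ∑ l, ‖b i l‖ ^ 2 := hcnorm (b i)
  have hwn : ‖w‖ ≤ evnorm (a i) := by
    have h6 : ‖w‖ ^ 2 = ∑ j, ‖g j‖ ^ 2 := by
      rw [EuclideanSpace.norm_eq]
      rw [Real.sq_sqrt (Finset.sum_nonneg fun j _ => sq_nonneg _)]
      rfl
    have h7 := hbessel (aE i)
    have h8 : ‖w‖ ^ 2 ≤ ‖aE i‖ ^ 2 := by rw [h6]; exact h7
    have h9 : ‖aE i‖ = evnorm (a i) := (evnorm_eq (a i)).symm
    nlinarith [norm_nonneg w, norm_nonneg (aE i)]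
  calc (∑ j, c i j * g j).re ≤ ‖∑ j, c i j * g j‖ := Complex.re_le_norm _
    _ = ‖(inner ℂ cc w : ℂ)‖ := by rw [hip]
    _ ≤ ‖cc‖ * ‖w‖ := norm_inner_le_norm _ _
    _ ≤ evnorm (b i) * evnorm (a i) := by
        rw [hccn]
        exact mul_le_mul_of_nonneg_left hwn (by rw [← hccn]; exact norm_nonneg _)
    _ = evnorm (a i) * evnorm (b i) := mul_comm _ _

lemma evnorm_vec_le_one {m : Type*} [Fintype m] [DecidableEq m] {A : Matrix m m ℂ}
    (hA : A.PosSemidef) (htr : A.trace = 1) :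
    evnorm (fun kk' : m × m => A kk'.1 kk'.2) ≤ 1 := by
  classical
  set S := hA.sqrt with hSdef
  have hS : Sᴴ * S = A := by
    have hU := Unitary.coe_star_mul_self hA.1.eigenvectorUnitary
    have hsp := hA.1.spectral_theorem
    rw [Unitary.conjStarAlgAut_apply] at hsp
    conv_rhs => rw [hsp]
    rw [hSdef, Matrix.PosSemidef.sqrt]
    simp only [Matrix.conjTranspose_mul, Matrix.star_eq_conjTranspose, Matrix.conjTranspose_conjTranspose,
      Matrix.diagonal_conjTranspose, Matrix.mul_assoc]
    rw [← Matrix.star_eq_conjTranspose, ← Matrix.mul_assoc (star _ : Matrix m m ℂ), hU, Matrix.one_mul,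
      ← Matrix.mul_assoc, Matrix.mul_assoc, ← Matrix.mul_assoc (diagonal _), Matrix.diagonal_mul_diagonal]
    congr 3
    funext k
    simp only [Function.comp_apply, Pi.star_apply, RCLike.star_def, RCLike.conj_ofReal,
      ← RCLike.ofReal_mul, Real.mul_self_sqrt (hA.eigenvalues_nonneg k)]
  set s : m → EuclideanSpace ℂ m := fun k => (WithLp.equiv 2 (m → ℂ)).symm (fun j => S j k)
    with hs
  have hik : ∀ k k', A k k' = (inner ℂ (s k) (s k') : ℂ) := by
    intro k k'
    rw [← hS]
    simp [Matrix.mul_apply, PiLp.inner_apply, RCLike.inner_apply, Matrix.conjTranspose_apply, hs]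
    exact Finset.sum_congr rfl fun _ _ => mul_comm _ _
  have habs : ∀ k k', ‖A k k'‖ ≤ ‖s k‖ * ‖s k'‖ := by
    intro k k'; rw [hik]; exact norm_inner_le_norm _ _
  have hdiag : ∀ k, (A k k).re = ‖s k‖ ^ 2 := by
    intro k
    have h := hik k k
    rw [inner_self_eq_norm_sq_to_K (𝕜 := ℂ), ← RCLike.ofReal_pow] at h
    rw [h]
    exact_mod_cast rfl
  have hsum : ∑ k, ‖s k‖ ^ 2 = 1 := by
    have h1 : A.trace.re = 1 := by rw [htr]; rfl
    rw [Matrix.trace, Complex.re_sum] at h1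
    rw [← h1]
    exact Finset.sum_congr rfl fun k _ => (hdiag k).symm
  rw [evnorm]
  rw [show (1 : ℝ) = Real.sqrt 1 from (Real.sqrt_one).symm]
  apply Real.sqrt_le_sqrt
  calc ∑ kk' : m × m, ‖A kk'.1 kk'.2‖ ^ 2
      ≤ ∑ kk' : m × m, ‖s kk'.1‖ ^ 2 * ‖s kk'.2‖ ^ 2 := by
        refine Finset.sum_le_sum fun kk' _ => ?_
        have := habs kk'.1 kk'.2
        have h0 : (0:ℝ) ≤ ‖A kk'.1 kk'.2‖ := norm_nonneg _
        nlinarith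
    _ = (∑ k, ‖s k‖ ^ 2) * (∑ k, ‖s k‖ ^ 2) := by
        rw [Finset.sum_mul_sum]
        rw [Fintype.sum_prod_type]
    _ = 1 := by rw [hsum]; ring

/-- Realignment (computable cross-norm) criterion: the realigned matrix
`M^R (k,k') (l,l') = M (k,l) (k',l')` of a separable state has trace norm
at most 1. -/
theorem traceNorm_realignment_le_one_of_separable
    (d : ℕ) (ι : Type) [Fintype ι]
    (p : ι → ℝ)
    (A : ι → Matrix (Fin d) (Fin d) ℂ)
    (B : ι → Matrix (Fin d) (Fin d) ℂ)
    (hp : ∀ i, 0 ≤ p i) (hpsum : ∑ i, p i = 1)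
    (hA : ∀ i, (A i).PosSemidef) (hAtr : ∀ i, (A i).trace = 1)
    (hB : ∀ i, (B i).PosSemidef) (hBtr : ∀ i, (B i).trace = 1)
    (M : Matrix (Fin d × Fin d) (Fin d × Fin d) ℂ)
    (hM : M = ∑ i, (p i : ℂ) • (A i ⊗ₖ B i)) :
    traceNorm (Matrix.of fun kk' ll' : Fin d × Fin d =>
        M (kk'.1, ll'.1) (kk'.2, ll'.2)) ≤ 1 := by
  classical
  set a : ι → (Fin d × Fin d) → ℂ := fun i kk' => (p i : ℂ) * A i kk'.1 kk'.2 with ha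
  set b : ι → (Fin d × Fin d) → ℂ := fun i ll' => B i ll'.1 ll'.2 with hb
  have hN : (Matrix.of fun kk' ll' : Fin d × Fin d =>
      M (kk'.1, ll'.1) (kk'.2, ll'.2)) = ∑ i, Matrix.vecMulVec (a i) (b i) := by
    ext kk' ll'
    rw [Matrix.of_apply, hM]
    simp only [Matrix.sum_apply, Matrix.smul_apply, Matrix.kroneckerMap_apply,
      Matrix.vecMulVec_apply, smul_eq_mul, ha, hb]
    refine Finset.sum_congr rfl fun i _ => ?_
    ring
  refine le_trans (traceNorm_le_sum a b _ hN) ?_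
  have hbound : ∀ i, evnorm (a i) * evnorm (b i) ≤ p i := by
    intro i
    have h1 : evnorm (a i) = p i * evnorm (fun kk' : Fin d × Fin d => A i kk'.1 kk'.2) := by
      rw [evnorm, evnorm]
      have : ∀ kk' : Fin d × Fin d, ‖a i kk'‖ ^ 2 = p i ^ 2 * ‖A i kk'.1 kk'.2‖ ^ 2 := by
        intro kk'
        rw [ha]
        simp [norm_mul, mul_pow, Complex.norm_real, abs_of_nonneg (hp i)]
      simp_rw [this]
      rw [← Finset.mul_sum, Real.sqrt_mul (sq_nonneg _), Real.sqrt_sq (hp i)]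
    have h2 : evnorm (fun kk' : Fin d × Fin d => A i kk'.1 kk'.2) ≤ 1 :=
      evnorm_vec_le_one (hA i) (hAtr i)
    have h3 : evnorm (b i) ≤ 1 := evnorm_vec_le_one (hB i) (hBtr i)
    have h4 : 0 ≤ evnorm (fun kk' : Fin d × Fin d => A i kk'.1 kk'.2) := Real.sqrt_nonneg _
    have h5 : 0 ≤ evnorm (b i) := Real.sqrt_nonneg _
    rw [h1, mul_assoc]
    calc p i * ((evnorm fun kk' : Fin d × Fin d => A i kk'.1 kk'.2) * evnorm (b i))
        ≤ p i * 1 := mul_le_mul_of_nonneg_left (mul_le_one₀ h2 h5 h3) (hp i)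
      _ = p i := mul_one _
  calc ∑ i, evnorm (a i) * evnorm (b i) ≤ ∑ i, p i := Finset.sum_le_sum fun i _ => hbound i
    _ = 1 := hpsum
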